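/- arXiv:1310.8078 — 8 statements merged into one kernel-verified Lean document; each statement's English description precedes it below -/
import Mathlib

section
/- Let G be a finite group and S ⊆ G a subset that is inverse-closed (s ∈ S implies s⁻¹ ∈ S), does not contain the identity, and is closed under conjugation (g⁻¹sg ∈ S for all s ∈ S, g ∈ G). Then for every irreducible finite-dimensional complex representation of G with character χ, the complex number η_χ = (∑_{s ∈ S} χ(s)) / χ(1) is an eigenvalue of the adjacency matrix of the Cayley graph Γ(G,S), viewed as a matrix over ℂ. -/
/-!
Since `S` is a union of conjugacy classes, the class sum `∑ s ∈ S, ρ s` commutes with every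
`ρ g`, so by Schur's lemma it acts on the irreducible representation `V` as a scalar `c`.
Taking traces against `ρ u` gives `∑ s ∈ S, χ (s * u) = c * χ u` for all `u`, which says
that `χ` is an eigenvector of the adjacency matrix of the Cayley graph with eigenvalue `c`;
at `u = 1` it gives `c = η_χ`, as `χ 1 = dim V ≠ 0`.
-/

open CategoryTheory Matrix

theorem Finset.commute_sum_map_of_conj_mem {G M : Type*} [Group G] [Semiring M]
    (f : G →* M) (S : Finset G) (hS : ∀ s ∈ S, ∀ g : G, g⁻¹ * s * g ∈ S) (g : G) :
    Commute (f g) (∑ s ∈ S, f s) := by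
  rw [Commute, SemiconjBy, Finset.mul_sum, Finset.sum_mul]
  refine Finset.sum_nbij' (fun s => g * s * g⁻¹) (fun s => g⁻¹ * s * g)
    (fun s hs => by simpa using hS s hs g⁻¹) (fun s hs => hS s hs g)
    (fun s _ => by group) (fun s _ => by group) fun s _ => ?_
  rw [← map_mul, ← map_mul]
  congr 1
  group

namespace FDRep

variable {k G : Type*} [Field k]

section Monoid

variable [Monoid G]

theorem nontrivial_of_simple (V : FDRep k G) [Simple V] : Nontrivial V := by
  by_contra h
  rw [not_nontrivial_iff_subsingleton] at h
  exact id_nonzero V (by ext x; exact Subsingleton.elim _ _)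

theorem exists_eq_smul_one_of_commute [IsAlgClosed k] (V : FDRep k G) [Simple V]
    (f : V →ₗ[k] V) (hf : ∀ g : G, Commute (V.ρ g) f) : ∃ c : k, f = c • 1 := by
  let φ : V ⟶ V := ⟨ConcreteCategory.ofHom (C := FGModuleCat k) f,
    fun g => by ext x; exact LinearMap.congr_fun (hf g).symm x⟩
  obtain ⟨c, hc⟩ := endomorphism_simple_eq_smul_id k φ
  exact ⟨c, (congrArg (fun ψ : V ⟶ V => ψ.hom.hom.hom) hc).symm⟩

theorem character_one_ne_zero [CharZero k] (V : FDRep k G) [Simple V] : V.character 1 ≠ 0 := by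
  have := nontrivial_of_simple V
  rw [char_one]
  exact_mod_cast Module.finrank_pos.ne'

end Monoid

theorem sum_character_mul_eq [Group G] [IsAlgClosed k] [CharZero k]
    (V : FDRep k G) [Simple V]
    (S : Finset G) (hS : ∀ s ∈ S, ∀ g : G, g⁻¹ * s * g ∈ S) (u : G) :
    ∑ s ∈ S, V.character (s * u) = (∑ s ∈ S, V.character s) / V.character 1 * V.character u := by
  obtain ⟨c, hc⟩ := exists_eq_smul_one_of_commute V (∑ s ∈ S, V.ρ s)
    (S.commute_sum_map_of_conj_mem V.ρ hS)
  have hsum : ∀ u, ∑ s ∈ S, V.character (s * u) = c * V.character u := fun u =>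
    calc ∑ s ∈ S, V.character (s * u)
        = LinearMap.trace k V ((∑ s ∈ S, V.ρ s) * V.ρ u) := by
          simp only [Finset.sum_mul, map_sum, character, map_mul]
      _ = c * V.character u := by
          rw [hc, smul_mul_assoc, one_mul, map_smul, smul_eq_mul, character]
  have hc1 : (∑ s ∈ S, V.character s) / V.character 1 = c := by
    rw [div_eq_iff (character_one_ne_zero V), ← hsum 1]
    simp
  rw [hc1, hsum]

end FDRep

theorem Matrix.mem_spectrum_of_mulVec_eq_smul {n R : Type*} [Fintype n] [DecidableEq n]
    [CommRing R] {A : Matrix n n R} {v : n → R} {c : R} (hv : v ≠ 0) (hAv : A *ᵥ v = c • v) :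
    c ∈ spectrum R A := by
  rw [← Matrix.spectrum_toLin']
  exact Module.End.HasEigenvalue.mem_spectrum <| Module.End.hasEigenvalue_of_hasEigenvector
    ⟨Module.End.mem_eigenspace_iff.mpr (by rwa [Matrix.toLin'_apply]), hv⟩

theorem SimpleGraph.adjMatrix_mulVec_apply_eq_sum_mul {G R : Type*} [Group G] [Fintype G]
    [NonAssocSemiring R] (S : Finset G) (Γ : SimpleGraph G) [DecidableRel Γ.Adj]
    (hΓ : ∀ u v : G, Γ.Adj u v ↔ v * u⁻¹ ∈ S) (f : G → R) (u : G) :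
    (Γ.adjMatrix R *ᵥ f) u = ∑ s ∈ S, f (s * u) := by
  rw [adjMatrix_mulVec_apply]
  refine Finset.sum_nbij' (fun v => v * u⁻¹) (fun s => s * u) (fun v hv => ?_) (fun s hs => ?_)
    (fun v _ => by group) (fun s _ => by group) fun v _ => by group
  · exact (hΓ u v).mp ((mem_neighborFinset Γ u v).mp hv)
  · rw [mem_neighborFinset, hΓ]; simpa using hs

theorem stmt_0_general {G : Type} [Group G] [Fintype G] [DecidableEq G]
    (S : Finset G)
    (hconj : ∀ s ∈ S, ∀ g : G, g⁻¹ * s * g ∈ S)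
    (Γ : SimpleGraph G) [DecidableRel Γ.Adj]
    (hΓ : ∀ u v : G, Γ.Adj u v ↔ v * u⁻¹ ∈ S)
    (V : FDRep ℂ G) (hV : Simple V) :
    (∑ s ∈ S, V.character s) / V.character 1 ∈ spectrum ℂ (Γ.adjMatrix ℂ) := by
  have hχ : V.character ≠ 0 := fun h => FDRep.character_one_ne_zero V (congrFun h 1)
  refine Matrix.mem_spectrum_of_mulVec_eq_smul hχ (funext fun u => ?_)
  rw [Γ.adjMatrix_mulVec_apply_eq_sum_mul S hΓ, FDRep.sum_character_mul_eq V S hconj]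
  rfl

theorem stmt_0 {G : Type} [Group G] [Fintype G] [DecidableEq G]
    (S : Finset G)
    (hinv : ∀ s ∈ S, s⁻¹ ∈ S)
    (hid : (1 : G) ∉ S)
    (hconj : ∀ s ∈ S, ∀ g : G, g⁻¹ * s * g ∈ S)
    (Γ : SimpleGraph G) [DecidableRel Γ.Adj]
    (hΓ : ∀ u v : G, Γ.Adj u v ↔ v * u⁻¹ ∈ S)
    (V : FDRep ℂ G) (hV : Simple V) :
    (∑ s ∈ S, V.character s) / V.character 1 ∈ spectrum ℂ (Γ.adjMatrix ℂ) :=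
  stmt_0_general S hconj Γ hΓ V hV
end

section
/- Let G be a finite group and S ⊆ G a subset that is inverse-closed, does not contain the identity, and is closed under conjugation. Then every eigenvalue of the adjacency matrix of the Cayley graph Γ(G,S), viewed as a matrix over ℂ, is of the form η_χ = (∑_{s ∈ S} χ(s)) / χ(1) for some irreducible finite-dimensional complex representation of G with character χ. -/
/-!
The adjacency operator of `Γ(G, S)` sends `v` to `x ↦ ∑_{s ∈ S} v (s x)`, so it commutes with
right translations and each of its eigenspaces is a subrepresentation of the right regular
representation. Take an irreducible subrepresentation `W` of the `μ`-eigenspace. Since `S` is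
closed under conjugation, `∑_{s ∈ S} v (x s) = ∑_{s ∈ S} v (s x)`, so `∑_{s ∈ S} ρ_W(s)` acts on `W`
as the scalar `μ`; taking traces gives `∑_{s ∈ S} χ_W(s) = μ · dim W = μ · χ_W(1)`.
-/

open CategoryTheory

universe u

section Irreducible

variable {k : Type u} {G : Type*} [Field k] [Monoid G]

theorem FDRep.injective_of_mono {X Y : FDRep k G} (f : X ⟶ Y) [Mono f] : Function.Injective f :=
  (Rep.mono_iff_injective ((forget₂ (FDRep k G) (Rep k G)).map f)).1 inferInstance

theorem Representation.IsIrreducible.nontrivial {V : Type*} [AddCommGroup V] [Module k V]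
    (ρ : Representation k G V) [ρ.IsIrreducible] : Nontrivial V := by
  by_contra h
  rw [not_nontrivial_iff_subsingleton] at h
  exact bot_ne_top (α := Subrepresentation ρ)
    (Subrepresentation.toSubmodule_injective (Subsingleton.elim _ _))

theorem FDRep.simple_of_isIrreducible {V : Type u} [AddCommGroup V] [Module k V]
    [FiniteDimensional k V] (ρ : Representation k G V) [ρ.IsIrreducible] :
    Simple (FDRep.of ρ) := by
  have := Representation.IsIrreducible.nontrivial ρ
  refine ⟨fun {Y} f _ => ?_⟩
  let φ : Representation.IntertwiningMap Y.ρ ρ :=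
    LinearMap.intertwiningMap_of_isIntertwiningMap _ _ f.hom.hom.hom fun g v =>
      LinearMap.congr_fun (congrArg (fun h => h.hom.hom) (f.comm g)) v
  have hsurj_ne : Function.Surjective f → f ≠ 0 := fun hf hf0 => by
    obtain ⟨v, hv⟩ := exists_ne (0 : V)
    obtain ⟨y, rfl⟩ := hf v
    exact hv (by rw [hf0]; rfl)
  rw [ConcreteCategory.isIso_iff_bijective]
  rcases Representation.IsIrreducible.surjective_or_eq_zero φ with hsurj | hzero
  · exact iff_of_true ⟨FDRep.injective_of_mono f, hsurj⟩ (hsurj_ne hsurj)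
  · have hf0 : f = 0 := by
      ext y
      exact DFunLike.congr_fun hzero y
    exact iff_of_false (fun hf => hsurj_ne hf.2 hf0) (not_not.2 hf0)

theorem FDRep.sum_character_of_sum_eq_smul {V : Type u} [AddCommGroup V] [Module k V]
    [FiniteDimensional k V] (ρ : Representation k G V) (S : Finset G) (μ : k)
    (h : ∑ s ∈ S, ρ s = μ • LinearMap.id) :
    ∑ s ∈ S, (FDRep.of ρ).character s = μ * Module.finrank k V :=
  calc ∑ s ∈ S, (FDRep.of ρ).character s = LinearMap.trace k V (∑ s ∈ S, ρ s) :=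
        (map_sum _ _ _).symm
    _ = μ * Module.finrank k V := by rw [h, map_smul, LinearMap.trace_id, smul_eq_mul]

end Irreducible

namespace Subrepresentation

variable {k G V : Type*} [Field k] [Monoid G] [AddCommGroup V] [Module k V]
  {ρ : Representation k G V}

instance [FiniteDimensional k V] : WellFoundedLT (Subrepresentation ρ) :=
  StrictMono.wellFoundedLT (f := toSubmodule) fun _ _ h => h

def mapSubtype (W : Subrepresentation ρ) (U : Subrepresentation W.toRepresentation) :
    Subrepresentation ρ where
  toSubmodule := U.toSubmodule.map W.toSubmodule.subtype
  apply_mem_toSubmodule g := by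
    rintro _ ⟨w, hw, rfl⟩
    exact ⟨_, U.apply_mem_toSubmodule g hw, rfl⟩

theorem mapSubtype_injective (W : Subrepresentation ρ) : Function.Injective W.mapSubtype :=
  fun _ _ h => toSubmodule_injective <|
    Submodule.map_injective_of_injective W.toSubmodule.injective_subtype (congrArg toSubmodule h)

theorem mapSubtype_le (W : Subrepresentation ρ) (U : Subrepresentation W.toRepresentation) :
    W.mapSubtype U ≤ W :=
  Submodule.map_subtype_le _ _

theorem mapSubtype_bot (W : Subrepresentation ρ) : W.mapSubtype ⊥ = ⊥ :=
  toSubmodule_injective (Submodule.map_bot _)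

theorem mapSubtype_top (W : Subrepresentation ρ) : W.mapSubtype ⊤ = W :=
  toSubmodule_injective (Submodule.map_subtype_top _)

theorem isIrreducible_toRepresentation_of_isAtom {W : Subrepresentation ρ} (hW : IsAtom W) :
    W.toRepresentation.IsIrreducible where
  exists_pair_ne := ⟨⊥, ⊤, fun h => hW.1 <| by rw [← W.mapSubtype_top, ← h, mapSubtype_bot]⟩
  eq_bot_or_eq_top U := by
    rcases hW.le_iff.1 (W.mapSubtype_le U) with h | h
    · exact Or.inl (W.mapSubtype_injective (h.trans W.mapSubtype_bot.symm))
    · exact Or.inr (W.mapSubtype_injective (h.trans W.mapSubtype_top.symm))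

theorem sum_toRepresentation_eq_smul {W : Subrepresentation ρ} (S : Finset G) (μ : k)
    (h : ∀ v ∈ W, ∑ s ∈ S, ρ s v = μ • v) :
    ∑ s ∈ S, W.toRepresentation s = μ • LinearMap.id := by
  ext w
  simpa [LinearMap.sum_apply, Submodule.coe_sum, toRepresentation] using h w w.2

end Subrepresentation

def Representation.eigenSubrepresentation {k G V : Type*} [Field k] [Monoid G] [AddCommGroup V]
    [Module k V] (ρ : Representation k G V) (T : Module.End k V) (hT : ∀ g, Commute T (ρ g))
    (μ : k) : Subrepresentation ρ where
  toSubmodule := T.eigenspace μ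
  apply_mem_toSubmodule g v hv := by
    rw [Module.End.mem_eigenspace_iff] at hv ⊢
    rw [← Module.End.mul_apply, (hT g).eq, Module.End.mul_apply, hv, map_smul]

section Cayley

variable {k G : Type*} [Group G] {S : Finset G}

def rightRegular [CommSemiring k] : Representation k G (G → k) where
  toFun g := LinearMap.funLeft k k (· * g)
  map_one' := by ext; simp
  map_mul' g h := by ext; simp [mul_assoc]

@[simp]
theorem rightRegular_apply [CommSemiring k] (g : G) (v : G → k) (x : G) :
    rightRegular g v x = v (x * g) :=
  rfl

theorem Finset.sum_apply_mul_comm_of_conj_mem {M : Type*} [AddCommMonoid M]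
    (hconj : ∀ s ∈ S, ∀ g : G, g⁻¹ * s * g ∈ S) (v : G → M) (x : G) :
    ∑ s ∈ S, v (x * s) = ∑ s ∈ S, v (s * x) := by
  refine Finset.sum_nbij' (fun s => x * s * x⁻¹) (fun t => x⁻¹ * t * x) ?_ ?_ ?_ ?_ ?_
  · intro s hs
    simpa using hconj s hs x⁻¹
  · exact fun t ht => hconj t ht x
  all_goals intro s _; group

variable [Fintype G] {Γ : SimpleGraph G} [DecidableRel Γ.Adj]

theorem SimpleGraph.adjMatrix_mulVec_apply_of_cayley [NonAssocSemiring k]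
    (hΓ : ∀ u v : G, Γ.Adj u v ↔ v * u⁻¹ ∈ S) (v : G → k) (x : G) :
    (Γ.adjMatrix k).mulVec v x = ∑ s ∈ S, v (s * x) := by
  rw [SimpleGraph.adjMatrix_mulVec_apply]
  refine Finset.sum_nbij' (· * x⁻¹) (· * x) ?_ ?_ ?_ ?_ ?_ <;> intro y hy <;>
    simp_all [SimpleGraph.mem_neighborFinset]

theorem SimpleGraph.commute_toLin'_adjMatrix_rightRegular [CommSemiring k] [DecidableEq G]
    (hΓ : ∀ u v : G, Γ.Adj u v ↔ v * u⁻¹ ∈ S) (g : G) :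
    Commute (Matrix.toLin' (Γ.adjMatrix k)) (rightRegular g) :=
  LinearMap.ext fun v => funext fun x => by
    simp [Matrix.toLin'_apply, adjMatrix_mulVec_apply_of_cayley hΓ, mul_assoc]

theorem SimpleGraph.sum_rightRegular_eq_adjMatrix_mulVec [CommSemiring k]
    (hΓ : ∀ u v : G, Γ.Adj u v ↔ v * u⁻¹ ∈ S) (hconj : ∀ s ∈ S, ∀ g : G, g⁻¹ * s * g ∈ S)
    (v : G → k) : ∑ s ∈ S, rightRegular s v = (Γ.adjMatrix k).mulVec v := by
  ext x
  simp [Finset.sum_apply, adjMatrix_mulVec_apply_of_cayley hΓ,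
    Finset.sum_apply_mul_comm_of_conj_mem hconj]

end Cayley

theorem stmt_1_general {G : Type} [Group G] [Fintype G] [DecidableEq G]
    (S : Finset G)
    (hconj : ∀ s ∈ S, ∀ g : G, g⁻¹ * s * g ∈ S)
    (Γ : SimpleGraph G) [DecidableRel Γ.Adj]
    (hΓ : ∀ u v : G, Γ.Adj u v ↔ v * u⁻¹ ∈ S) :
    ∀ μ ∈ spectrum ℂ (Γ.adjMatrix ℂ),
      ∃ V : FDRep ℂ G, Simple V ∧ μ = (∑ s ∈ S, V.character s) / V.character 1 := by
  intro μ hμ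
  set E := rightRegular.eigenSubrepresentation _ (Γ.commute_toLin'_adjMatrix_rightRegular hΓ) μ
  have hE : E ≠ ⊥ := by
    rw [← Matrix.spectrum_toLin', ← Module.End.hasEigenvalue_iff_mem_spectrum,
      Module.End.hasEigenvalue_iff] at hμ
    exact fun h => hμ (congrArg Subrepresentation.toSubmodule h)
  obtain ⟨W, hW, hWE⟩ := (eq_bot_or_exists_atom_le E).resolve_left hE
  have := Subrepresentation.isIrreducible_toRepresentation_of_isAtom hW
  have hsum : ∑ s ∈ S, W.toRepresentation s = μ • LinearMap.id :=
    Subrepresentation.sum_toRepresentation_eq_smul S μ fun v hv =>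
      (Γ.sum_rightRegular_eq_adjMatrix_mulVec hΓ hconj v).trans
        (Module.End.mem_eigenspace_iff.1 (hWE hv))
  have hdim : (Module.finrank ℂ W.toSubmodule : ℂ) ≠ 0 := by
    have := Representation.IsIrreducible.nontrivial W.toRepresentation
    exact_mod_cast Module.finrank_pos.ne'
  refine ⟨FDRep.of W.toRepresentation, FDRep.simple_of_isIrreducible _, ?_⟩
  rw [FDRep.sum_character_of_sum_eq_smul _ S μ hsum, FDRep.char_one, mul_div_cancel_right₀ _ hdim]

theorem stmt_1 {G : Type} [Group G] [Fintype G] [DecidableEq G]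
    (S : Finset G)
    (hinv : ∀ s ∈ S, s⁻¹ ∈ S)
    (hid : (1 : G) ∉ S)
    (hconj : ∀ s ∈ S, ∀ g : G, g⁻¹ * s * g ∈ S)
    (Γ : SimpleGraph G) [DecidableRel Γ.Adj]
    (hΓ : ∀ u v : G, Γ.Adj u v ↔ v * u⁻¹ ∈ S) :
    ∀ μ ∈ spectrum ℂ (Γ.adjMatrix ℂ),
      ∃ V : FDRep ℂ G, Simple V ∧ μ = (∑ s ∈ S, V.character s) / V.character 1 :=
  stmt_1_general S hconj Γ hΓ
end

section
/- Let n ≥ 1 and let S be a subset of the symmetric group S_n that is inverse-closed, does not contain the identity, and is closed under conjugation (g⁻¹sg ∈ S for all s ∈ S, g ∈ S_n). Then every real eigenvalue of the adjacency matrix of the Cayley graph Γ(S_n, S) is an integer. -/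
/-!
Let `a = ∑ s ∈ S, ρ s` for a representation `ρ` of a finite group `G` over an algebraically
closed field `K` of characteristic zero, where `S` is closed under conjugation and under powers
coprime to `|G|` (in `Sₙ` the second closure follows from the first, because `s ^ k` has the
cycle type of `s`). The generalized eigenspace `W` of an eigenvalue `x` of `a` is `G`-stable, so
`x * dim W = tr (a|W) = ∑ s ∈ S, χ_W s`. A field automorphism `σ` acts on the `|G|`-th roots of
unity as `ζ ↦ ζ ^ k` with `k` coprime to `|G|`, hence `σ (χ_W s) = χ_W (s ^ k)`, and `s ↦ s ^ k`
permutes `S`; therefore `σ x = x`. For the left regular representation over `ℚ̄` this says that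
every eigenvalue of the Cayley graph is rational; being an algebraic integer, it is an integer.
-/

open Module Polynomial

theorem RingEquiv.exists_coprime_apply_eq_pow_of_pow_eq_one {K : Type*} [Field K] (m : ℕ)
    [NeZero m] [HasEnoughRootsOfUnity K m] (σ : K ≃+* K) :
    ∃ k : ℕ, k.Coprime m ∧ ∀ μ : K, μ ^ m = 1 → σ μ = μ ^ k := by
  obtain ⟨ζ, hζ⟩ := HasEnoughRootsOfUnity.exists_primitiveRoot K m
  set c := modularCyclotomicCharacter K hζ.card_rootsOfUnity σ
  refine ⟨(c : ZMod m).val, ZMod.val_coe_unit_coprime c, fun μ hμ => ?_⟩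
  have hμ' : Units.mk0 μ (by rintro rfl; simp [NeZero.ne m] at hμ) ∈ rootsOfUnity m K := by
    rw [mem_rootsOfUnity]
    ext
    simpa using hμ
  simpa using modularCyclotomicCharacter.spec K hζ.card_rootsOfUnity σ hμ'

namespace Module.End

theorem trace_pow_of_isNilpotent_sub_algebraMap {R M : Type*} [CommRing R] [IsReduced R]
    [AddCommGroup M] [Module R M] [Module.Free R M] [Module.Finite R M] {f : End R M} {μ : R}
    (hf : IsNilpotent (f - algebraMap R (End R M) μ)) (k : ℕ) :
    LinearMap.trace R M (f ^ k) = μ ^ k * finrank R M := by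
  induction k with
  | zero => simp
  | succ k ih =>
    rw [pow_succ, mul_eq_comp, LinearMap.trace_comp_eq_mul_of_commute_of_isNilpotent μ
      ((Commute.refl f).pow_left k) hf, ih]
    ring

variable {K V : Type*} [Field K] [IsAlgClosed K] [AddCommGroup V] [Module K V]
  [FiniteDimensional K V]

theorem exists_trace_pow_eq_sum_mul_finrank (f : End K V) :
    ∃ s : Finset K, (∀ μ ∈ s, f.HasEigenvalue μ) ∧ ∀ k : ℕ,
      LinearMap.trace K V (f ^ k) = ∑ μ ∈ s, μ ^ k * finrank K (f.maxGenEigenspace μ) := by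
  classical
  have hfin := WellFoundedGT.finite_ne_bot_of_iSupIndep f.independent_maxGenEigenspace
  have hds := DirectSum.isInternal_submodule_of_iSupIndep_of_iSup_eq_top
    f.independent_maxGenEigenspace f.iSup_maxGenEigenspace_eq_top
  refine ⟨hfin.toFinset, fun μ hμ => ?_, fun k => ?_⟩
  · exact hasEigenvalue_of_hasGenEigenvalue (k := 1)
      (HasUnifEigenvalue.lt (k := ⊤) (by simp) (hfin.mem_toFinset.mp hμ))
  rw [LinearMap.trace_eq_sum_trace_restrict' hds hfin
    (fun μ => f.mapsTo_maxGenEigenspace_of_comm ((Commute.refl f).pow_right k) μ)]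
  refine Finset.sum_congr rfl fun μ _ => ?_
  rw [← pow_restrict k (f.mapsTo_maxGenEigenspace_of_comm (Commute.refl f) μ),
    trace_pow_of_isNilpotent_sub_algebraMap
      (f.isNilpotent_restrict_maxGenEigenspace_sub_algebraMap μ)]

theorem map_trace_eq_trace_pow (σ : K →+* K) (f : End K V) {k : ℕ}
    (hσ : ∀ μ, f.HasEigenvalue μ → σ μ = μ ^ k) :
    σ (LinearMap.trace K V f) = LinearMap.trace K V (f ^ k) := by
  obtain ⟨s, hs, htrace⟩ := f.exists_trace_pow_eq_sum_mul_finrank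
  have htrace_one := htrace 1
  simp only [pow_one] at htrace_one
  rw [htrace_one, htrace k, map_sum]
  refine Finset.sum_congr rfl fun μ hμ => ?_
  rw [map_mul, map_natCast, hσ μ (hs μ hμ)]

end Module.End

theorem Finset.sum_comp_pow_of_coprime {G M : Type*} [Group G] [Finite G] [AddCommMonoid M]
    {S : Finset G} {k : ℕ} (hk : k.Coprime (Nat.card G)) (hS : ∀ s ∈ S, s ^ k ∈ S)
    (f : G → M) : ∑ s ∈ S, f (s ^ k) = ∑ s ∈ S, f s := by
  have hinj : Set.InjOn (· ^ k) (S : Set G) := (powCoprime hk.symm).injective.injOn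
  exact Finset.sum_nbij (· ^ k) hS hinj (Finset.surjOn_of_injOn_of_card_le _ hS hinj le_rfl)
    fun _ _ => rfl

namespace Representation

theorem commute_sum_of_conj_mem {K G V : Type*} [CommSemiring K] [Group G] [AddCommMonoid V]
    [Module K V] (ρ : Representation K G V) {S : Finset G}
    (hS : ∀ s ∈ S, ∀ g : G, g⁻¹ * s * g ∈ S) (g : G) : Commute (∑ s ∈ S, ρ s) (ρ g) := by
  simp only [Commute, SemiconjBy, Finset.sum_mul, Finset.mul_sum, ← map_mul]
  refine Finset.sum_equiv (MulAut.conj g⁻¹).toEquiv (fun s => ⟨fun hs => by simpa using hS s hs g,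
    fun hs => by simpa [mul_assoc] using hS _ hs g⁻¹⟩) fun s _ => ?_
  simp [mul_assoc]

variable {K G V : Type*} [Field K] [IsAlgClosed K] [CharZero K] [Group G] [Finite G]
  [AddCommGroup V] [Module K V] [FiniteDimensional K V]

theorem exists_coprime_map_trace_eq_trace_pow (ρ : Representation K G V) (σ : K ≃+* K) :
    ∃ k : ℕ, k.Coprime (Nat.card G) ∧
      ∀ g : G, σ (LinearMap.trace K V (ρ g)) = LinearMap.trace K V (ρ (g ^ k)) := by
  obtain ⟨k, hk, hσ⟩ := σ.exists_coprime_apply_eq_pow_of_pow_eq_one (Nat.card G)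
  refine ⟨k, hk, fun g => ?_⟩
  rw [map_pow, ← Module.End.map_trace_eq_trace_pow σ.toRingHom (ρ g)]
  · rfl
  intro μ hμ
  obtain ⟨v, hv⟩ := hμ.exists_hasEigenvector
  refine hσ μ (smul_left_injective K hv.2 ?_)
  simp only [← hv.pow_apply, ← map_pow, pow_card_eq_one', map_one, one_smul, Module.End.one_apply]

theorem map_eq_self_of_hasEigenvalue_sum (ρ : Representation K G V) {S : Finset G}
    (hconj : ∀ s ∈ S, ∀ g : G, g⁻¹ * s * g ∈ S)
    (hpow : ∀ k : ℕ, k.Coprime (Nat.card G) → ∀ s ∈ S, s ^ k ∈ S)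
    {x : K} (hx : Module.End.HasEigenvalue (∑ s ∈ S, ρ s) x) (σ : K ≃+* K) : σ x = x := by
  set a : Module.End K V := ∑ s ∈ S, ρ s
  set W := a.maxGenEigenspace x
  have hW : ∀ g, Set.MapsTo (ρ g) W W :=
    fun g => a.mapsTo_maxGenEigenspace_of_comm (ρ.commute_sum_of_conj_mem hconj g) x
  let ρW := ρ.subrepresentation W hW
  have haW : ∀ v ∈ W, a v ∈ W := fun v hv => a.mapsTo_maxGenEigenspace_of_comm (.refl a) x hv
  have ha : a.restrict haW = ∑ s ∈ S, ρW s := by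
    ext w
    simp only [a, LinearMap.coe_restrict_apply, LinearMap.sum_apply, Submodule.coe_sum]
    rfl
  have htrace : LinearMap.trace K W (∑ s ∈ S, ρW s) = x * finrank K W := by
    simpa [← ha] using Module.End.trace_pow_of_isNilpotent_sub_algebraMap
      (a.isNilpotent_restrict_maxGenEigenspace_sub_algebraMap x) 1
  have hW0 : (finrank K W : K) ≠ 0 := by
    rw [Nat.cast_ne_zero, Ne, Submodule.finrank_eq_zero]
    exact Module.End.HasUnifEigenvalue.lt (k := 1) (m := ⊤) (by simp) hx
  obtain ⟨k, hk, hσ⟩ := ρW.exists_coprime_map_trace_eq_trace_pow σ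
  refine mul_right_cancel₀ hW0 ?_
  calc σ x * finrank K W = σ (LinearMap.trace K W (∑ s ∈ S, ρW s)) := by
        rw [htrace, map_mul, map_natCast]
    _ = ∑ s ∈ S, LinearMap.trace K W (ρW (s ^ k)) := by simp [map_sum, hσ]
    _ = x * finrank K W := by
        rw [Finset.sum_comp_pow_of_coprime hk (hpow k hk) (fun g => LinearMap.trace K W (ρW g)),
          ← htrace, map_sum]

end Representation

def Representation.leftRegularFun (K G : Type*) [CommSemiring K] [Group G] :
    Representation K G (G → K) where
  toFun g := LinearMap.funLeft K K (g⁻¹ * ·)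
  map_one' := by ext; simp
  map_mul' g h := by ext; simp [mul_assoc]

namespace SimpleGraph

theorem map_adjMatrix {V α β : Type*} (Γ : SimpleGraph V) [DecidableRel Γ.Adj]
    [NonAssocSemiring α] [NonAssocSemiring β] (f : α →+* β) :
    (Γ.adjMatrix α).map f = Γ.adjMatrix β := by
  ext u v
  simp [adjMatrix_apply, apply_ite f]

variable {G : Type*} [Group G] [Fintype G] [DecidableEq G] (Γ : SimpleGraph G)
  [DecidableRel Γ.Adj] {S : Finset G}

theorem toLin'_adjMatrix_eq_sum_leftRegularFun {K : Type*} [CommSemiring K]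
    (hΓ : ∀ u v, Γ.Adj u v ↔ v * u⁻¹ ∈ S) :
    Matrix.toLin' (Γ.adjMatrix K) = ∑ s ∈ S, Representation.leftRegularFun K G s := by
  refine LinearMap.ext fun f => funext fun u => ?_
  simp only [Matrix.toLin'_apply, adjMatrix_mulVec_apply, LinearMap.sum_apply, Finset.sum_apply]
  refine Finset.sum_nbij' (fun w => u * w⁻¹) (fun s => s⁻¹ * u) ?_ ?_ ?_ ?_ ?_
  · intro w hw
    simpa [← hΓ, Γ.adj_comm] using hw
  · intro s hs
    rw [mem_neighborFinset, Γ.adj_comm, hΓ]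
    simpa [mul_assoc] using hs
  all_goals intro _ _; simp [Representation.leftRegularFun, mul_assoc]

theorem map_eq_self_of_isRoot_charpoly_adjMatrix {K : Type*} [Field K] [IsAlgClosed K]
    [CharZero K] (hconj : ∀ s ∈ S, ∀ g : G, g⁻¹ * s * g ∈ S)
    (hpow : ∀ k : ℕ, k.Coprime (Nat.card G) → ∀ s ∈ S, s ^ k ∈ S)
    (hΓ : ∀ u v, Γ.Adj u v ↔ v * u⁻¹ ∈ S) {x : K} (hx : (Γ.adjMatrix K).charpoly.IsRoot x)
    (σ : K ≃+* K) : σ x = x := by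
  rw [← Matrix.charpoly_toLin', ← Module.End.hasEigenvalue_iff_isRoot_charpoly,
    Γ.toLin'_adjMatrix_eq_sum_leftRegularFun hΓ] at hx
  exact (Representation.leftRegularFun K G).map_eq_self_of_hasEigenvalue_sum hconj hpow hx σ

end SimpleGraph

namespace Equiv.Perm

variable {α : Type*} [Fintype α] [DecidableEq α]

theorem cycleType_pow_of_coprime {σ : Perm α} {k : ℕ} (hk : k.Coprime (orderOf σ)) :
    (σ ^ k).cycleType = σ.cycleType := by
  induction σ using cycle_induction_on with
  | base_one => rw [one_pow]
  | base_cycles c hc =>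
    rw [(hc.pow_iff.mpr hk).cycleType, hc.cycleType, support_pow_coprime hk]
  | induction_disjoint σ τ hd _ ihσ ihτ =>
    rw [hd.orderOf] at hk
    rw [hd.commute.mul_pow, (hd.pow_disjoint_pow k k).cycleType_mul, hd.cycleType_mul,
      ihσ (hk.coprime_dvd_right (Nat.dvd_lcm_left _ _)),
      ihτ (hk.coprime_dvd_right (Nat.dvd_lcm_right _ _))]

theorem isConj_pow_of_coprime {σ : Perm α} {k : ℕ} (hk : k.Coprime (orderOf σ)) :
    IsConj σ (σ ^ k) :=
  isConj_iff_cycleType_eq.mpr (cycleType_pow_of_coprime hk).symm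

theorem pow_mem_of_conj_mem {S : Set (Perm α)} (hS : ∀ s ∈ S, ∀ g : Perm α, g⁻¹ * s * g ∈ S)
    {k : ℕ} (hk : k.Coprime (Nat.card (Perm α))) {s : Perm α} (hs : s ∈ S) : s ^ k ∈ S := by
  obtain ⟨c, hc⟩ :=
    isConj_iff.mp (isConj_pow_of_coprime (hk.coprime_dvd_right (orderOf_dvd_natCard s)))
  rw [← hc]
  simpa using hS s hs c⁻¹

end Equiv.Perm

theorem Polynomial.Monic.exists_int_eq_of_isRoot {F L : Type*} [Field F] [Algebra ℚ F]
    [IsAlgClosure ℚ F] [Field L] [CharZero L] {p : ℤ[X]} (hp : p.Monic)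
    (hfix : ∀ z : F, (p.map (Int.castRingHom F)).IsRoot z → ∀ σ : F ≃+* F, σ z = z) {μ : L}
    (hμ : (p.map (Int.castRingHom L)).IsRoot μ) : ∃ m : ℤ, μ = m := by
  have := IsAlgClosure.isAlgClosed ℚ (K := F)
  have := IsSepClosure.of_isAlgClosure_of_perfectField ℚ F
  have hμℤ : IsIntegral ℤ μ := ⟨p, hp, by simpa [eval_map] using hμ⟩
  have hμℚ : IsIntegral ℚ μ := hμℤ.tower_top
  obtain ⟨z, hz⟩ := IsAlgClosed.exists_aeval_eq_zero F (minpoly ℚ μ) (minpoly.degree_pos hμℚ).ne'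
  have hzp : (p.map (Int.castRingHom F)).IsRoot z := by
    obtain ⟨c, hc⟩ := minpoly.dvd ℚ μ (p := p.map (algebraMap ℤ ℚ))
      (by rwa [aeval_map_algebraMap, aeval_def, algebraMap_int_eq, ← eval_map])
    rw [IsRoot, eval_map, ← algebraMap_int_eq, ← aeval_def, ← aeval_map_algebraMap ℚ, hc,
      map_mul, hz, zero_mul]
  obtain ⟨r, rfl⟩ := (InfiniteGalois.mem_range_algebraMap_iff_fixed (k := ℚ) z).mpr
    fun σ => hfix z hzp σ.toRingEquiv
  have hminpoly : minpoly ℚ μ = X - C r := by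
    rw [minpoly.eq_of_irreducible_of_monic (minpoly.irreducible hμℚ) hz (minpoly.monic hμℚ),
      minpoly.eq_X_sub_C]
  have hμr : μ = algebraMap ℚ L r := by
    simpa [hminpoly, sub_eq_zero] using minpoly.aeval ℚ μ
  obtain ⟨m, hm⟩ := IsIntegrallyClosed.isIntegral_iff.mp
    ((isIntegral_algebraMap_iff (algebraMap ℚ L).injective).mp (hμr ▸ hμℤ))
  exact ⟨m, by rw [hμr, ← hm]; simp⟩

theorem stmt_2_general {n : ℕ}
    (S : Set (Equiv.Perm (Fin n)))
    (hconj : ∀ s ∈ S, ∀ g : Equiv.Perm (Fin n), g⁻¹ * s * g ∈ S)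
    (Γ : SimpleGraph (Equiv.Perm (Fin n))) [DecidableRel Γ.Adj]
    (hΓ : ∀ u v : Equiv.Perm (Fin n), Γ.Adj u v ↔ v * u⁻¹ ∈ S) :
    ∀ μ ∈ spectrum ℝ (Γ.adjMatrix ℝ), ∃ m : ℤ, μ = m := by
  classical
  intro μ hμ
  -- `IsAlgClosure` is registered for this instance, not for `DivisionRing.toRatAlgebra`.
  let _ : Algebra ℚ (AlgebraicClosure ℚ) := AlgebraicClosure.instAlgebra ℚ
  refine (Γ.adjMatrix ℤ).charpoly_monic.exists_int_eq_of_isRoot (F := AlgebraicClosure ℚ)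
    (fun z hz σ => ?_) ?_
  · rw [← Matrix.charpoly_map, Γ.map_adjMatrix] at hz
    refine Γ.map_eq_self_of_isRoot_charpoly_adjMatrix (S := S.toFinset) ?_ ?_ ?_ hz σ
    · simpa using hconj
    · intro k hk s hs
      rw [Set.mem_toFinset] at hs ⊢
      exact Equiv.Perm.pow_mem_of_conj_mem hconj hk hs
    · simpa using hΓ
  · rwa [← Matrix.charpoly_map, Γ.map_adjMatrix, ← Matrix.mem_spectrum_iff_isRoot_charpoly]

theorem stmt_2 {n : ℕ} (hn : 1 ≤ n)
    (S : Set (Equiv.Perm (Fin n)))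
    (hinv : ∀ s ∈ S, s⁻¹ ∈ S)
    (hid : (1 : Equiv.Perm (Fin n)) ∉ S)
    (hconj : ∀ s ∈ S, ∀ g : Equiv.Perm (Fin n), g⁻¹ * s * g ∈ S)
    (Γ : SimpleGraph (Equiv.Perm (Fin n))) [DecidableRel Γ.Adj]
    (hΓ : ∀ u v : Equiv.Perm (Fin n), Γ.Adj u v ↔ v * u⁻¹ ∈ S) :
    ∀ μ ∈ spectrum ℝ (Γ.adjMatrix ℝ), ∃ m : ℤ, μ = m :=
  stmt_2_general S hconj Γ hΓ
end

section
/- Let G be a finite group and let S₁, S₂ ⊆ G be inverse-closed subsets not containing the identity such that the adjacency matrices of Γ(G,S₁) and Γ(G,S₂) commute and every real eigenvalue of each of these two adjacency matrices is an integer. If S₂ ⊆ S₁, then every real eigenvalue of the adjacency matrix of Γ(G, S₁ \ S₂) is an integer. -/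
open Module.End LinearMap

lemma aux_eig_sub {E : Type} [NormedAddCommGroup E] [InnerProductSpace ℝ E]
    [FiniteDimensional ℝ E] {A B : E →ₗ[ℝ] E} (hA : A.IsSymmetric) (hB : B.IsSymmetric)
    (hAB : Commute A B) {μ : ℝ} (hμ : Module.End.HasEigenvalue (A - B) μ) :
    ∃ a b : ℝ, Module.End.HasEigenvalue A a ∧ Module.End.HasEigenvalue B b ∧ μ = a - b := by
  by_contra hcon
  push_neg at hcon
  have hμD : μ ∉ {d : ℝ | ∃ a b : ℝ, Module.End.HasEigenvalue A a ∧
      Module.End.HasEigenvalue B b ∧ d = a - b} := by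
    rintro ⟨a, b, ha, hb, hd⟩
    exact hcon a b ha hb hd
  have hsup : (⨆ d ∈ {d : ℝ | ∃ a b : ℝ, Module.End.HasEigenvalue A a ∧
      Module.End.HasEigenvalue B b ∧ d = a - b}, Module.End.eigenspace (A - B) d) = ⊤ := by
    apply top_unique
    rw [← LinearMap.IsSymmetric.iSup_iSup_eigenspace_inf_eigenspace_eq_top_of_commute hA hB hAB]
    refine iSup_le fun α => iSup_le fun γ => ?_
    rcases eq_or_ne (Module.End.eigenspace A α ⊓ Module.End.eigenspace B γ) ⊥ with h | h
    · exact h ▸ bot_le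
    · have hα : Module.End.HasEigenvalue A α := by
        intro hbot
        exact h (le_bot_iff.mp (hbot ▸ inf_le_left))
      have hγ : Module.End.HasEigenvalue B γ := by
        intro hbot
        exact h (le_bot_iff.mp (hbot ▸ inf_le_right))
      refine le_trans ?_ (le_biSup _ (show (α - γ) ∈ _ from ⟨α, γ, hα, hγ, rfl⟩))
      intro v hv
      rw [Submodule.mem_inf] at hv
      obtain ⟨h1, h2⟩ := hv
      rw [Module.End.mem_eigenspace_iff] at h1 h2 ⊢
      simp [LinearMap.sub_apply, h1, h2, sub_smul]
  have key := (Module.End.eigenspaces_iSupIndep (A - B)).disjoint_biSup hμD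
  rw [hsup, disjoint_top] at key
  exact hμ key

theorem stmt_7 {G : Type} [Group G] [Fintype G] [DecidableEq G]
    (S₁ S₂ : Set G)
    (hinv₁ : ∀ s ∈ S₁, s⁻¹ ∈ S₁) (hid₁ : (1 : G) ∉ S₁)
    (hinv₂ : ∀ s ∈ S₂, s⁻¹ ∈ S₂) (hid₂ : (1 : G) ∉ S₂)
    (Γ₁ Γ₂ Γ : SimpleGraph G)
    [DecidableRel Γ₁.Adj] [DecidableRel Γ₂.Adj] [DecidableRel Γ.Adj]
    (hΓ₁ : ∀ u v : G, Γ₁.Adj u v ↔ v * u⁻¹ ∈ S₁)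
    (hΓ₂ : ∀ u v : G, Γ₂.Adj u v ↔ v * u⁻¹ ∈ S₂)
    (hcomm : Γ₁.adjMatrix ℝ * Γ₂.adjMatrix ℝ = Γ₂.adjMatrix ℝ * Γ₁.adjMatrix ℝ)
    (hint₁ : ∀ μ ∈ spectrum ℝ (Γ₁.adjMatrix ℝ), ∃ m : ℤ, μ = m)
    (hint₂ : ∀ μ ∈ spectrum ℝ (Γ₂.adjMatrix ℝ), ∃ m : ℤ, μ = m)
    (hsub : S₂ ⊆ S₁)
    (hΓ : ∀ u v : G, Γ.Adj u v ↔ v * u⁻¹ ∈ S₁ \ S₂) :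
    ∀ μ ∈ spectrum ℝ (Γ.adjMatrix ℝ), ∃ m : ℤ, μ = m := by
  intro μ hμ
  have hAeq : Γ.adjMatrix ℝ = Γ₁.adjMatrix ℝ - Γ₂.adjMatrix ℝ := by
    ext i j
    simp only [Matrix.sub_apply, SimpleGraph.adjMatrix_apply]
    by_cases hm2 : j * i⁻¹ ∈ S₂
    · rw [if_pos ((hΓ₁ i j).mpr (hsub hm2)), if_pos ((hΓ₂ i j).mpr hm2),
        if_neg (fun hadj => ((hΓ i j).mp hadj).2 hm2)]
      norm_num
    · by_cases hm1 : j * i⁻¹ ∈ S₁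
      · rw [if_pos ((hΓ i j).mpr ⟨hm1, hm2⟩), if_pos ((hΓ₁ i j).mpr hm1),
          if_neg (fun hadj => hm2 ((hΓ₂ i j).mp hadj))]
        norm_num
      · rw [if_neg (fun hadj => hm1 ((hΓ i j).mp hadj).1),
          if_neg (fun hadj => hm1 ((hΓ₁ i j).mp hadj)),
          if_neg (fun hadj => hm2 ((hΓ₂ i j).mp hadj))]
        norm_num
  set e : Matrix G G ℝ ≃ₐ[ℝ] (EuclideanSpace ℝ G →ₗ[ℝ] EuclideanSpace ℝ G) :=
    Matrix.toLinAlgEquiv (PiLp.basisFun 2 ℝ G) with he_def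
  have he : ∀ M : Matrix G G ℝ, e M = Matrix.toEuclideanLin M := fun M => rfl
  have hherm : ∀ (Γ' : SimpleGraph G) (_ : DecidableRel Γ'.Adj),
      (Γ'.adjMatrix ℝ).IsHermitian := by
    intro Γ' _
    unfold Matrix.IsHermitian
    ext i j
    simp only [Matrix.conjTranspose_apply, SimpleGraph.adjMatrix_apply, star_trivial]
    exact if_congr (SimpleGraph.adj_comm Γ' j i) rfl rfl
  have hsym₁ : (e (Γ₁.adjMatrix ℝ)).IsSymmetric := by
    rw [he]
    exact Matrix.isHermitian_iff_isSymmetric.mp (hherm Γ₁ ‹_›)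
  have hsym₂ : (e (Γ₂.adjMatrix ℝ)).IsSymmetric := by
    rw [he]
    exact Matrix.isHermitian_iff_isSymmetric.mp (hherm Γ₂ ‹_›)
  have hc : Commute (e (Γ₁.adjMatrix ℝ)) (e (Γ₂.adjMatrix ℝ)) := by
    show _ * _ = _ * _
    rw [← map_mul, ← map_mul, hcomm]
  have hspec : ∀ (M : Matrix G G ℝ) (c : ℝ),
      Module.End.HasEigenvalue (e M) c → c ∈ spectrum ℝ M := by
    intro M c hc
    rw [← AlgEquiv.spectrum_eq e M]
    exact Module.End.hasEigenvalue_iff_mem_spectrum.mp hc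
  have hμ' : Module.End.HasEigenvalue (e (Γ₁.adjMatrix ℝ) - e (Γ₂.adjMatrix ℝ)) μ := by
    rw [← map_sub, ← hAeq]
    exact Module.End.hasEigenvalue_iff_mem_spectrum.mpr
      (by rw [AlgEquiv.spectrum_eq e]; exact hμ)
  obtain ⟨a, b, ha, hb, hab⟩ := aux_eig_sub hsym₁ hsym₂ hc hμ'
  obtain ⟨m₁, hm₁⟩ := hint₁ a (hspec _ _ ha)
  obtain ⟨m₂, hm₂⟩ := hint₂ b (hspec _ _ hb)
  exact ⟨m₁ - m₂, by rw [hab, hm₁, hm₂]; push_cast; ring⟩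
end

section
/- Let 1 ≤ k < n and let S = {(a b) : a ∈ [k], b ∈ [n] \ [k]} be the set of all transpositions in S_n swapping an element of the first k points with an element of the remaining n−k points. Then every real eigenvalue of the adjacency matrix of the Cayley graph Γ(S_n, S) is an integer. -/
/-!
Write `T`, `P`, `Q` for the sums, in the left regular representation of `S_n`, of all
transpositions, of the transpositions of `[k]`, and of the transpositions of `[n] \ [k]`.
The adjacency matrix of the Cayley graph is `T - P - Q`. The class sum `T` is central and `P`, `Q`
have disjoint supports, so the three symmetric matrices commute; a joint eigenvector then writes
every eigenvalue of `T - P - Q` as `t - p - q` with `t`, `p`, `q` eigenvalues of `T`, `P`, `Q`.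
Each of these is a sum of commuting Jucys–Murphy elements `X_j = ∑_{i < j} (i j)`, and
`X_j = s X_{j'} s + s` with `s = (j' j)`, `j'` the predecessor of `j`; since `X_{j'}` commutes
with `X_j`, every eigenvalue of `X_j` is an eigenvalue of `X_{j'}` or differs from one by `±1`.
-/

open Module.End
open scoped Matrix

namespace Matrix

variable {V : Type*} [Fintype V] [DecidableEq V]

theorem mem_spectrum_iff_exists_mulVec_eq_smul {M : Matrix V V ℝ} {μ : ℝ} :
    μ ∈ spectrum ℝ M ↔ ∃ v ≠ 0, M *ᵥ v = μ • v := by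
  rw [← spectrum_toLin', ← hasEigenvalue_iff_mem_spectrum, hasEigenvalue_iff,
    Submodule.ne_bot_iff]
  simp only [mem_eigenspace_iff, toLin'_apply]
  tauto

theorem exists_common_eigenvector {M X : Matrix V V ℝ} (hX : X.IsSymm) (hMX : Commute M X)
    {μ : ℝ} (hμ : μ ∈ spectrum ℝ M) :
    ∃ (a : ℝ) (v : V → ℝ), v ≠ 0 ∧ X *ᵥ v = a • v ∧ M *ᵥ v = μ • v := by
  set Φ := toLinAlgEquiv (EuclideanSpace.basisFun V ℝ).toBasis
  have hΦ (N : Matrix V V ℝ) : Φ N = toEuclideanLin N := rfl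
  have hsymm : (Φ X).IsSymmetric := by
    rw [hΦ, isSymmetric_toEuclideanLin_iff, IsHermitian, conjTranspose_eq_transpose_of_trivial]
    exact hX
  have hμ' : eigenspace (Φ M) μ ≠ ⊥ := by
    rw [← hasEigenvalue_iff, hasEigenvalue_iff_mem_spectrum, AlgEquiv.spectrum_eq]
    exact hμ
  rw [← hsymm.iSup_eigenspace_inf_eigenspace_of_commute (hMX.map Φ), ne_eq, iSup_eq_bot] at hμ'
  push Not at hμ'
  obtain ⟨a, hne⟩ := hμ'
  obtain ⟨x, hx, hx0⟩ := Submodule.ne_bot_iff _ |>.mp hne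
  rw [Submodule.mem_inf, mem_eigenspace_iff, mem_eigenspace_iff, hΦ, hΦ] at hx
  refine ⟨a, WithLp.ofLp x, by simpa using hx0, ?_, ?_⟩
  · simpa [toLpLin_apply] using congrArg WithLp.ofLp hx.2
  · simpa [toLpLin_apply] using congrArg WithLp.ofLp hx.1

def HasIntegralSpectrum (M : Matrix V V ℝ) : Prop :=
  ∀ μ ∈ spectrum ℝ M, ∃ m : ℤ, μ = m

namespace HasIntegralSpectrum

theorem of_mulVec_eq_smul {M : Matrix V V ℝ} (h : HasIntegralSpectrum M) {v : V → ℝ}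
    (hv : v ≠ 0) {μ : ℝ} (hMv : M *ᵥ v = μ • v) : ∃ m : ℤ, μ = m :=
  h μ (mem_spectrum_iff_exists_mulVec_eq_smul.mpr ⟨v, hv, hMv⟩)

theorem zero : HasIntegralSpectrum (0 : Matrix V V ℝ) := by
  intro μ hμ
  obtain ⟨v, hv, h0⟩ := mem_spectrum_iff_exists_mulVec_eq_smul.mp hμ
  rw [zero_mulVec, eq_comm, smul_eq_zero] at h0
  exact ⟨0, by simpa [hv] using h0⟩

theorem neg {M : Matrix V V ℝ} (h : HasIntegralSpectrum M) : HasIntegralSpectrum (-M) := by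
  intro μ hμ
  rw [← spectrum.neg_eq, Set.mem_neg] at hμ
  obtain ⟨m, hm⟩ := h _ hμ
  exact ⟨-m, by push_cast; linarith⟩

theorem add {A B : Matrix V V ℝ} (hA : A.IsSymm) (hAB : Commute A B)
    (hA' : HasIntegralSpectrum A) (hB' : HasIntegralSpectrum B) :
    HasIntegralSpectrum (A + B) := by
  intro μ hμ
  obtain ⟨a, v, hv, hAv, hABv⟩ :=
    exists_common_eigenvector hA ((Commute.refl A).add_left hAB.symm) hμ
  have hBv : B *ᵥ v = (μ - a) • v := by
    rw [sub_smul, ← hAv, ← hABv, add_mulVec, add_sub_cancel_left]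
  obtain ⟨m, rfl⟩ := hA'.of_mulVec_eq_smul hv hAv
  obtain ⟨m', hm'⟩ := hB'.of_mulVec_eq_smul hv hBv
  exact ⟨m + m', by push_cast; linarith⟩

theorem sub {A B : Matrix V V ℝ} (hA : A.IsSymm) (hAB : Commute A B)
    (hA' : HasIntegralSpectrum A) (hB' : HasIntegralSpectrum B) :
    HasIntegralSpectrum (A - B) :=
  sub_eq_add_neg A B ▸ hA'.add hA hAB.neg_right hB'.neg

theorem sum {ι : Type*} {s : Finset ι} {f : ι → Matrix V V ℝ}
    (hsymm : ∀ i ∈ s, (f i).IsSymm)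
    (hcomm : (s : Set ι).Pairwise fun i j => Commute (f i) (f j))
    (h : ∀ i ∈ s, HasIntegralSpectrum (f i)) : HasIntegralSpectrum (∑ i ∈ s, f i) := by
  classical
  induction s using Finset.induction_on with
  | empty => simpa using zero
  | insert i s hi ih =>
    rw [Finset.sum_insert hi]
    simp only [Finset.mem_insert, forall_eq_or_imp] at hsymm h
    rw [Finset.coe_insert, Set.pairwise_insert] at hcomm
    have hi_comm : Commute (f i) (∑ j ∈ s, f j) := Commute.sum_right _ _ _ fun j hj =>
      (hcomm.2 j hj (ne_of_mem_of_not_mem hj hi).symm).1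
    exact h.1.add hsymm.1 hi_comm (ih hsymm.2 hcomm.1 h.2)

theorem mul_mul_add {Y S : Matrix V V ℝ} (hY : Y.IsSymm) (hS : S * S = 1)
    (hc : Commute Y (S * Y * S + S)) (h : HasIntegralSpectrum Y) :
    HasIntegralSpectrum (S * Y * S + S) := by
  intro μ hμ
  obtain ⟨a, v, hv, hYv, hMv⟩ := exists_common_eigenvector hY hc.symm hμ
  obtain ⟨m, rfl⟩ := h.of_mulVec_eq_smul hv hYv
  rw [add_mulVec, ← mulVec_mulVec, ← mulVec_mulVec] at hMv
  generalize hw : S *ᵥ v = w at hMv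
  have hSw : S *ᵥ w = v := by rw [← hw, mulVec_mulVec, hS, one_mulVec]
  have hYw : Y *ᵥ w = μ • w - v :=
    calc Y *ᵥ w = S *ᵥ (S *ᵥ (Y *ᵥ w)) := by rw [mulVec_mulVec, hS, one_mulVec]
      _ = μ • w - v := by rw [eq_sub_of_add_eq hMv, mulVec_sub, mulVec_smul, hSw, hw]
  by_cases hu : v + ((m : ℝ) - μ) • w = 0
  · have hvw : v = (μ - m) • w := by linear_combination (norm := module) hu
    have hwv : w = (μ - m) • v := by
      rw [← hw]
      conv_lhs => rw [hvw, mulVec_smul, hSw]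
    have : ((μ - m - 1) * (μ - m + 1)) • v = 0 := by
      linear_combination (norm := module) -hvw - (μ - m) • hwv
    rcases mul_eq_zero.mp ((smul_eq_zero.mp this).resolve_right hv) with h1 | h1
    · exact ⟨m + 1, by push_cast; linarith⟩
    · exact ⟨m - 1, by push_cast; linarith⟩
  · exact h.of_mulVec_eq_smul hu (by
      rw [mulVec_add, mulVec_smul, hYv, hYw]; module)

end HasIntegralSpectrum

end Matrix

section LeftRegular

variable (R : Type*) [Semiring R] {G : Type*} [Group G] [Fintype G] [DecidableEq G]

def leftRegularMatrix : G →* Matrix G G R where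
  toFun g := Matrix.of fun u v => if u = g * v then 1 else 0
  map_one' := by ext u v; simp [Matrix.one_apply]
  map_mul' g h := by
    ext u w
    simp [Matrix.mul_apply, mul_assoc]

variable {R}

theorem leftRegularMatrix_apply (g u v : G) :
    leftRegularMatrix R g u v = if u = g * v then 1 else 0 := rfl

theorem transpose_leftRegularMatrix (g : G) :
    (leftRegularMatrix R g)ᵀ = leftRegularMatrix R g⁻¹ := by
  ext u v
  simp only [Matrix.transpose_apply, leftRegularMatrix_apply, eq_inv_mul_iff_mul_eq, eq_comm]

theorem isSymm_leftRegularMatrix {g : G} (hg : g⁻¹ = g) : (leftRegularMatrix R g).IsSymm := by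
  rw [Matrix.IsSymm, transpose_leftRegularMatrix, hg]

theorem commute_leftRegularMatrix_sum {g : G} {S : Finset G}
    (hS : ∀ σ, g * σ * g⁻¹ ∈ S ↔ σ ∈ S) :
    Commute (leftRegularMatrix R g) (∑ σ ∈ S, leftRegularMatrix R σ) := by
  rw [Commute, SemiconjBy, Finset.mul_sum, Finset.sum_mul]
  simp only [← map_mul]
  exact Finset.sum_equiv (MulAut.conj g).toEquiv (fun σ => (hS σ).symm) fun σ _ => by simp

theorem SimpleGraph.adjMatrix_eq_sum_leftRegularMatrix (Γ : SimpleGraph G) [DecidableRel Γ.Adj]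
    (S : Finset G) (hΓ : ∀ u v, Γ.Adj u v ↔ v * u⁻¹ ∈ S) :
    Γ.adjMatrix R = ∑ σ ∈ S, leftRegularMatrix R σ := by
  ext u v
  simp only [SimpleGraph.adjMatrix_apply, Matrix.sum_apply, leftRegularMatrix_apply,
    ← mul_inv_eq_iff_eq_mul, Finset.sum_ite_eq]
  exact if_congr (by rw [Γ.adj_comm, hΓ]) rfl rfl

end LeftRegular

open Equiv Finset

theorem Equiv.eq_and_eq_of_swap_eq_swap {α : Type*} [LinearOrder α] {i j i' j' : α}
    (hij : i < j) (hij' : i' < j') (h : swap i j = swap i' j') : i = i' ∧ j = j' := by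
  have hmoved (x : α) (hx : swap i j x ≠ x) : x = i' ∨ x = j' :=
    (swap_apply_ne_self_iff.mp (h ▸ hx)).2
  rcases hmoved i (by simpa using hij.ne') with rfl | rfl <;>
    rcases hmoved j (by simpa using hij.ne) with rfl | rfl
  all_goals first | exact ⟨rfl, rfl⟩ | order

section Transpositions

variable {α : Type*} [DecidableEq α] [Fintype α]

def transpositionsIn (s : Finset α) : Finset (Perm α) :=
  {σ | #σ.support = 2 ∧ σ.support ⊆ s}

theorem mem_transpositionsIn {s : Finset α} {σ : Perm α} :
    σ ∈ transpositionsIn s ↔ σ.IsSwap ∧ σ.support ⊆ s := by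
  rw [transpositionsIn, mem_filter, Perm.card_support_eq_two, and_iff_right (mem_univ σ)]

theorem swap_mem_transpositionsIn {s : Finset α} {a b : α} (hab : a ≠ b) :
    swap a b ∈ transpositionsIn s ↔ a ∈ s ∧ b ∈ s := by
  rw [mem_transpositionsIn, Perm.support_swap hab, insert_subset_iff, singleton_subset_iff]
  exact and_iff_right ⟨a, b, hab, rfl⟩

theorem conj_mem_transpositionsIn {s : Finset α} {g : Perm α} (hg : ∀ x, g x ∈ s ↔ x ∈ s)
    {σ : Perm α} : g * σ * g⁻¹ ∈ transpositionsIn s ↔ σ ∈ transpositionsIn s := by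
  simp only [transpositionsIn, mem_filter, mem_univ, true_and, Perm.support_conj, card_map]
  refine and_congr_right fun _ => ⟨fun h x hx => (hg x).mp (h (mem_map_of_mem _ hx)),
    fun h y hy => ?_⟩
  obtain ⟨x, hx, rfl⟩ := mem_map.mp hy
  exact (hg x).mpr (h hx)

theorem transpositionsIn_mono {s t : Finset α} (h : s ⊆ t) :
    transpositionsIn s ⊆ transpositionsIn t := fun _ hσ => by
  rw [mem_transpositionsIn] at hσ ⊢
  exact ⟨hσ.1, hσ.2.trans h⟩

theorem disjoint_transpositionsIn {s t : Finset α} (h : Disjoint s t) :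
    Disjoint (transpositionsIn s) (transpositionsIn t) := by
  refine disjoint_left.mpr fun σ hs ht => ?_
  rw [mem_transpositionsIn] at hs ht
  obtain ⟨x, hx⟩ : σ.support.Nonempty :=
    card_pos.mp (by rw [Perm.card_support_eq_two.mpr hs.1]; norm_num)
  exact disjoint_left.mp h (hs.2 hx) (ht.2 hx)

theorem mem_transpositionsIn_univ_sdiff {A : Finset α} {σ : Perm α} :
    σ ∈ transpositionsIn univ \ (transpositionsIn A ∪ transpositionsIn Aᶜ) ↔
      ∃ a ∈ A, ∃ b ∉ A, σ = swap a b := by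
  constructor
  · simp only [mem_sdiff, mem_union, mem_transpositionsIn]
    rintro ⟨⟨⟨x, y, hxy, rfl⟩, -⟩, h⟩
    rw [← mem_transpositionsIn, ← mem_transpositionsIn, swap_mem_transpositionsIn hxy,
      swap_mem_transpositionsIn hxy, mem_compl, mem_compl] at h
    by_cases hx : x ∈ A
    · exact ⟨x, hx, y, by tauto, rfl⟩
    · exact ⟨y, by tauto, x, hx, swap_comm x y⟩
  · rintro ⟨a, ha, b, hb, rfl⟩
    have hab : a ≠ b := by rintro rfl; exact hb ha
    simp [swap_mem_transpositionsIn hab, ha, hb]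

theorem sum_transpositionsIn_univ_sdiff {M : Type*} [AddCommGroup M] (A : Finset α)
    (f : Perm α → M) :
    ∑ σ ∈ transpositionsIn univ \ (transpositionsIn A ∪ transpositionsIn Aᶜ), f σ =
      ∑ σ ∈ transpositionsIn univ, f σ - ∑ σ ∈ transpositionsIn A, f σ -
        ∑ σ ∈ transpositionsIn Aᶜ, f σ := by
  rw [sum_sdiff_eq_sub, sum_union, sub_add_eq_sub_sub]
  · exact disjoint_transpositionsIn disjoint_compl_right
  · exact union_subset (transpositionsIn_mono (subset_univ _))
      (transpositionsIn_mono (subset_univ _))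

end Transpositions

local notation "ρ" => leftRegularMatrix ℝ

section TranspositionSum

variable {α : Type*} [DecidableEq α] [Fintype α]

noncomputable def transpositionSum (s : Finset α) : Matrix (Perm α) (Perm α) ℝ :=
  ∑ σ ∈ transpositionsIn s, ρ σ

theorem isSymm_transpositionSum (s : Finset α) : (transpositionSum s).IsSymm := by
  refine (Matrix.transpose_sum _ _).trans (sum_congr rfl fun σ hσ => ?_)
  obtain ⟨⟨x, y, -, rfl⟩, -⟩ := mem_transpositionsIn.mp hσ
  exact isSymm_leftRegularMatrix (swap_inv x y)

theorem commute_leftRegularMatrix_transpositionSum {s : Finset α} {g : Perm α}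
    (hg : ∀ x, g x ∈ s ↔ x ∈ s) : Commute (ρ g) (transpositionSum s) :=
  commute_leftRegularMatrix_sum fun _ => conj_mem_transpositionsIn hg

theorem commute_transpositionSum_univ (s : Finset α) :
    Commute (transpositionSum s) (transpositionSum univ) :=
  Commute.sum_left _ _ _ fun _ _ =>
    commute_leftRegularMatrix_transpositionSum fun _ => by simp only [mem_univ]

theorem commute_transpositionSum_of_disjoint {s t : Finset α} (h : Disjoint s t) :
    Commute (transpositionSum s) (transpositionSum t) := by
  refine Commute.sum_left _ _ _ fun σ hσ => commute_leftRegularMatrix_transpositionSum fun x => ?_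
  have hsupp := (mem_transpositionsIn.mp hσ).2
  by_cases hx : x ∈ σ.support
  · have hσx := Perm.apply_mem_support.mpr hx
    exact iff_of_false (disjoint_left.mp h (hsupp hσx)) (disjoint_left.mp h (hsupp hx))
  · rw [Perm.notMem_support.mp hx]

end TranspositionSum

section JucysMurphy

variable {α : Type*} [LinearOrder α] [Fintype α]

theorem sum_transpositionsIn {M : Type*} [AddCommMonoid M] (s : Finset α) (f : Perm α → M) :
    ∑ σ ∈ transpositionsIn s, f σ = ∑ j ∈ s, ∑ i ∈ s with i < j, f (swap i j) := by
  rw [sum_sigma']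
  symm
  refine sum_nbij (fun x => swap x.2 x.1) ?_ ?_ ?_ fun _ _ => rfl
  · simp only [mem_sigma, mem_filter]
    rintro ⟨j, i⟩ ⟨hj, hi, hij⟩
    exact (swap_mem_transpositionsIn hij.ne).mpr ⟨hi, hj⟩
  · rintro ⟨j, i⟩ hx ⟨j', i'⟩ hx' h
    simp only [coe_sigma, Set.mem_sigma_iff, mem_coe, mem_filter] at hx hx'
    obtain ⟨rfl, rfl⟩ := Equiv.eq_and_eq_of_swap_eq_swap hx.2.2 hx'.2.2 h
    rfl
  · intro σ hσ
    obtain ⟨⟨x, y, hxy, rfl⟩, -⟩ := mem_transpositionsIn.mp hσ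
    obtain ⟨hx, hy⟩ := (swap_mem_transpositionsIn hxy).mp hσ
    rcases hxy.lt_or_gt with h | h
    · exact ⟨⟨y, x⟩, by simp [hx, hy, h], rfl⟩
    · exact ⟨⟨x, y⟩, by simp [hx, hy, h], swap_comm y x⟩

noncomputable def jucysMurphy (s : Finset α) (j : α) : Matrix (Perm α) (Perm α) ℝ :=
  ∑ i ∈ s with i < j, ρ (swap i j)

theorem isSymm_jucysMurphy (s : Finset α) (j : α) : (jucysMurphy s j).IsSymm :=
  (Matrix.transpose_sum _ _).trans <|
    sum_congr rfl fun i _ => isSymm_leftRegularMatrix (swap_inv i j)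

theorem commute_leftRegularMatrix_jucysMurphy {s : Finset α} {j : α} {σ : Perm α}
    (hσ : ∀ x, σ x ≠ x → x ∈ s ∧ x < j) : Commute (ρ σ) (jucysMurphy s j) := by
  have hσj : σ j = j := by
    by_contra h
    exact (hσ j h).2.false
  rw [Commute, SemiconjBy, jucysMurphy, mul_sum, sum_mul]
  simp only [← map_mul, mul_swap_eq_swap_mul, hσj]
  exact (Perm.sum_comp σ _ (fun i => ρ (swap i j * σ)) fun x hx => by simpa using hσ x hx)

theorem commute_jucysMurphy {s : Finset α} {j l : α} (hj : j ∈ s) (hjl : j < l) :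
    Commute (jucysMurphy s j) (jucysMurphy s l) := by
  refine Commute.sum_left _ _ _ fun i hi => commute_leftRegularMatrix_jucysMurphy fun x hx => ?_
  rw [mem_filter] at hi
  rcases (swap_apply_ne_self_iff.mp hx).2 with rfl | rfl
  · exact ⟨hi.1, hi.2.trans hjl⟩
  · exact ⟨hj, hjl⟩

theorem jucysMurphy_eq {s : Finset α} {j' j : α} (hj' : j' ∈ s) (hj'j : j' < j)
    (hmax : ∀ i ∈ s, i < j → i ≤ j') :
    jucysMurphy s j = ρ (swap j' j) * jucysMurphy s j' * ρ (swap j' j) + ρ (swap j' j) := by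
  have hfilter : ({i ∈ s | i < j} : Finset α) = insert j' {i ∈ s | i < j'} := by
    ext i
    simp only [mem_filter, mem_insert]
    constructor
    · rintro ⟨hi, hij⟩
      exact (hmax i hi hij).eq_or_lt.imp id fun h => ⟨hi, h⟩
    · rintro (rfl | ⟨hi, h⟩)
      exacts [⟨hj', hj'j⟩, ⟨hi, h.trans hj'j⟩]
  rw [jucysMurphy, jucysMurphy, hfilter, sum_insert (by simp), add_comm, mul_sum, sum_mul]
  congr 1
  refine sum_congr rfl fun i hi => ?_
  rw [mem_filter] at hi
  rw [← map_mul, ← map_mul, swap_mul_swap_mul_swap hi.2.ne (hi.2.trans hj'j).ne,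
    Equiv.swap_comm]

theorem hasIntegralSpectrum_jucysMurphy (s : Finset α) (j : α) :
    (jucysMurphy s j).HasIntegralSpectrum := by
  induction j using WellFoundedLT.induction with
  | _ j ih =>
  rcases ({i ∈ s | i < j} : Finset α).eq_empty_or_nonempty with h | h
  · rw [jucysMurphy, h, sum_empty]
    exact Matrix.HasIntegralSpectrum.zero
  obtain ⟨j', hj', hmax⟩ := exists_max_image _ id h
  rw [mem_filter] at hj'
  have hrec := jucysMurphy_eq hj'.1 hj'.2 fun i hi hij => hmax i (mem_filter.mpr ⟨hi, hij⟩)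
  rw [hrec]
  refine (ih j' hj'.2).mul_mul_add (isSymm_jucysMurphy s j') ?_ ?_
  · rw [← map_mul, Equiv.swap_mul_self, map_one]
  · rw [← hrec]
    exact commute_jucysMurphy hj'.1 hj'.2

theorem transpositionSum_eq_sum_jucysMurphy (s : Finset α) :
    transpositionSum s = ∑ j ∈ s, jucysMurphy s j :=
  sum_transpositionsIn s _

theorem hasIntegralSpectrum_transpositionSum (s : Finset α) :
    (transpositionSum s).HasIntegralSpectrum := by
  rw [transpositionSum_eq_sum_jucysMurphy]
  refine Matrix.HasIntegralSpectrum.sum (fun j _ => isSymm_jucysMurphy s j) ?_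
    fun j _ => hasIntegralSpectrum_jucysMurphy s j
  intro j hj l hl hjl
  rcases hjl.lt_or_gt with h | h
  · exact commute_jucysMurphy hj h
  · exact (commute_jucysMurphy hl h).symm

theorem hasIntegralSpectrum_transpositionSum_sub (A : Finset α) :
    (transpositionSum univ - transpositionSum A - transpositionSum Aᶜ).HasIntegralSpectrum := by
  rw [sub_sub]
  refine (hasIntegralSpectrum_transpositionSum univ).sub (isSymm_transpositionSum univ) ?_ ?_
  · exact ((commute_transpositionSum_univ A).add_left (commute_transpositionSum_univ Aᶜ)).symm
  · exact (hasIntegralSpectrum_transpositionSum A).add (isSymm_transpositionSum A)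
      (commute_transpositionSum_of_disjoint disjoint_compl_right)
      (hasIntegralSpectrum_transpositionSum Aᶜ)

end JucysMurphy

theorem stmt_11_general {n k : ℕ}
    (Γ : SimpleGraph (Equiv.Perm (Fin n))) [DecidableRel Γ.Adj]
    (hΓ : ∀ u v : Equiv.Perm (Fin n), Γ.Adj u v ↔
      ∃ a b : Fin n, (a : ℕ) < k ∧ k ≤ (b : ℕ) ∧ v * u⁻¹ = Equiv.swap a b) :
    ∀ μ ∈ spectrum ℝ (Γ.adjMatrix ℝ), ∃ m : ℤ, μ = m := by
  set A : Finset (Fin n) := {a | (a : ℕ) < k}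
  have hadj :
      Γ.adjMatrix ℝ = transpositionSum univ - transpositionSum A - transpositionSum Aᶜ := by
    rw [transpositionSum, transpositionSum, transpositionSum, ← sum_transpositionsIn_univ_sdiff]
    refine Γ.adjMatrix_eq_sum_leftRegularMatrix _ fun u v => ?_
    rw [hΓ, mem_transpositionsIn_univ_sdiff]
    simp [A]
  rw [hadj]
  exact hasIntegralSpectrum_transpositionSum_sub A

theorem stmt_11 {n k : ℕ} (hk : 1 ≤ k) (hkn : k < n)
    (Γ : SimpleGraph (Equiv.Perm (Fin n))) [DecidableRel Γ.Adj]
    (hΓ : ∀ u v : Equiv.Perm (Fin n), Γ.Adj u v ↔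
      ∃ a b : Fin n, (a : ℕ) < k ∧ k ≤ (b : ℕ) ∧ v * u⁻¹ = Equiv.swap a b) :
    ∀ μ ∈ spectrum ℝ (Γ.adjMatrix ℝ), ∃ m : ℤ, μ = m :=
  stmt_11_general Γ hΓ
end

section
/- Let 1 ≤ r ≤ k ≤ n, let M(r) = {σ ∈ S_n : |support(σ) ∩ [k]| = r}, and let H = {σ ∈ S_n : σ(i) = i for all i ∈ [k]}. Let α, α' ∈ S_n lie in distinct right cosets of H (i.e., α'·α⁻¹ ∉ H) and let β₀, δ₀ ∈ H. If β₀·α is adjacent to δ₀·α' in the Cayley graph Γ(S_n, M(r)), then β₀·α is adjacent to δ·α' in Γ(S_n, M(r)) for every δ ∈ H. -/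
theorem stmt_15 {n k r : ℕ} (hr : 1 ≤ r) (hrk : r ≤ k) (hkn : k ≤ n)
    (Γ : SimpleGraph (Equiv.Perm (Fin n)))
    (hΓ : ∀ u v : Equiv.Perm (Fin n), Γ.Adj u v ↔
      ((v * u⁻¹).support.filter fun i : Fin n => (i : ℕ) < k).card = r)
    (α α' : Equiv.Perm (Fin n))
    (hcoset : ¬ ∀ i : Fin n, (i : ℕ) < k → (α' * α⁻¹) i = i)
    (β₀ δ₀ : Equiv.Perm (Fin n))
    (hβ₀ : ∀ i : Fin n, (i : ℕ) < k → β₀ i = i)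
    (hδ₀ : ∀ i : Fin n, (i : ℕ) < k → δ₀ i = i)
    (hadj : Γ.Adj (β₀ * α) (δ₀ * α')) :
    ∀ δ : Equiv.Perm (Fin n), (∀ i : Fin n, (i : ℕ) < k → δ i = i) →
      Γ.Adj (β₀ * α) (δ * α') := by
  intro δ hδ
  rw [hΓ] at hadj ⊢
  -- any γ fixing [k] pointwise maps the complement to itself
  have key : ∀ (γ : Equiv.Perm (Fin n)), (∀ i : Fin n, (i : ℕ) < k → γ i = i) →
      ∀ j : Fin n, ¬ (j : ℕ) < k → ¬ ((γ j : ℕ) < k) := by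
    intro γ hγ j hj hc
    have h1 : γ (γ j) = γ j := hγ (γ j) hc
    have h2 : γ j = j := γ.injective h1
    exact hj (h2 ▸ hc)
  have eqpt : ∀ i : Fin n, (i : ℕ) < k →
      (((δ * α') * (β₀ * α)⁻¹) i = i ↔ ((δ₀ * α') * (β₀ * α)⁻¹) i = i) := by
    intro i hi
    have hβ : β₀⁻¹ i = i := by
      rw [Equiv.Perm.inv_eq_iff_eq]; exact (hβ₀ i hi).symm
    have hrw : ∀ γ : Equiv.Perm (Fin n),
        ((γ * α') * (β₀ * α)⁻¹) i = γ (α' (α⁻¹ i)) := by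
      intro γ
      simp [mul_inv_rev, Equiv.Perm.mul_apply, hβ]
    rw [hrw δ, hrw δ₀]
    set j := α' (α⁻¹ i) with hj
    by_cases hjk : (j : ℕ) < k
    · rw [hδ j hjk, hδ₀ j hjk]
    · constructor
      · intro h; exact absurd (h ▸ hi) (key δ hδ j hjk)
      · intro h; exact absurd (h ▸ hi) (key δ₀ hδ₀ j hjk)
  have : (((δ * α') * (β₀ * α)⁻¹).support.filter fun i : Fin n => (i : ℕ) < k) =
      (((δ₀ * α') * (β₀ * α)⁻¹).support.filter fun i : Fin n => (i : ℕ) < k) := by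
    ext i
    simp only [Finset.mem_filter, Equiv.Perm.mem_support]
    constructor
    · rintro ⟨h1, h2⟩; exact ⟨fun h => h1 ((eqpt i h2).mpr h), h2⟩
    · rintro ⟨h1, h2⟩; exact ⟨fun h => h1 ((eqpt i h2).mp h), h2⟩
  rw [this]; exact hadj
end

section
/- Let 1 ≤ r ≤ k ≤ n and let M(r) = {σ ∈ S_n : |support(σ) ∩ [k]| = r}. Then the arrangement graph A(n,k,r) is regular of degree |M(r)|/(n−k)!; that is, for every vertex v of A(n,k,r), (n−k)! times the degree of v equals |M(r)|. -/
/-!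
`Perm (Fin n)` acts transitively on the embeddings `Fin k ↪ Fin n` by graph automorphisms of
`A(n,k,r)`, so the graph is regular and it suffices to count the neighbours of the canonical
embedding `ι`. The orbit map `σ ↦ σ ∘ ι` has fibres of equal size `n! / n.descFactorial k = (n-k)!`,
and `σ ∘ ι` is a neighbour of `ι` exactly when `σ` moves `r` points of `[k]`, i.e. when `σ ∈ M(r)`.
-/

open Finset MulAction

section TransitiveAction

variable {G X : Type*} [Group G] [MulAction G X] [Fintype G] [DecidableEq X] [IsPretransitive G X]

theorem MulAction.card_filter_smul_eq_eq (x y z : X) :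
    #{g : G | g • x = y} = #{g : G | g • x = z} := by
  obtain ⟨h, rfl⟩ := exists_smul_eq G y z
  refine card_nbij' (h * ·) (h⁻¹ * ·) ?_ ?_ ?_ ?_ <;> intro g hg
  all_goals simp_all [mul_smul]

theorem MulAction.card_filter_smul_mem (x : X) (s : Finset X) :
    #{g : G | g • x ∈ s} = #s * #{g : G | g • x = x} := by
  rw [card_eq_sum_card_fiberwise (s := {g : G | g • x ∈ s}) (f := (· • x))
      fun g hg => (mem_filter.1 hg).2,
    sum_congr rfl fun y hy => ?_, sum_const, smul_eq_mul]
  rw [filter_filter, ← card_filter_smul_eq_eq x y x]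
  congr 1
  exact filter_congr fun g _ => and_iff_right_of_imp (· ▸ hy)

theorem MulAction.card_filter_smul_mem_mul_card [Fintype X] (x : X) (s : Finset X) :
    #{g : G | g • x ∈ s} * Fintype.card X = Fintype.card G * #s := by
  have hG : Fintype.card G = Fintype.card X * #{g : G | g • x = x} := by
    simpa using card_filter_smul_mem x (univ : Finset X)
  rw [card_filter_smul_mem, hG]
  ring

end TransitiveAction

theorem SimpleGraph.degree_eq_of_isPretransitive {G V : Type*} [Group G] [MulAction G V]
    [IsPretransitive G V] (A : SimpleGraph V) [Fintype V] [DecidableRel A.Adj]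
    (hA : ∀ (g : G) (v w : V), A.Adj (g • v) (g • w) ↔ A.Adj v w) (v w : V) :
    A.degree v = A.degree w := by
  obtain ⟨g, rfl⟩ := exists_smul_eq G w v
  exact SimpleGraph.Iso.degree_eq ⟨MulAction.toPerm g, hA g _ _⟩ w

theorem Equiv.Perm.card_support_filter_lt {n k : ℕ} (hkn : k ≤ n) (σ : Equiv.Perm (Fin n)) :
    #(σ.support.filter fun i : Fin n => (i : ℕ) < k) =
      #{i : Fin k | Fin.castLE hkn i ≠ σ (Fin.castLE hkn i)} := by
  rw [← card_map (Fin.castLEEmb hkn)]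
  congr 1
  ext j
  simp only [mem_filter, Equiv.Perm.mem_support, mem_map, mem_univ, true_and, Fin.castLEEmb_apply]
  constructor
  · rintro ⟨hj, hjk⟩
    exact ⟨⟨j, hjk⟩, Ne.symm hj, rfl⟩
  · rintro ⟨i, hi, rfl⟩
    exact ⟨Ne.symm hi, i.2⟩

theorem stmt_17_general {n k r : ℕ} (hkn : k ≤ n)
    (A : SimpleGraph (Fin k ↪ Fin n)) [DecidableRel A.Adj]
    (hA : ∀ p q : Fin k ↪ Fin n, A.Adj p q ↔
      (Finset.univ.filter fun i : Fin k => p i ≠ q i).card = r) :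
    ∀ v : Fin k ↪ Fin n, (n - k).factorial * A.degree v =
      (Finset.univ.filter fun σ : Equiv.Perm (Fin n) =>
        (σ.support.filter fun i : Fin n => (i : ℕ) < k).card = r).card := by
  intro v
  have : IsPretransitive (Equiv.Perm (Fin n)) (Fin k ↪ Fin n) :=
    Equiv.Perm.isMultiplyPretransitive (Fin n) k
  let ι := Fin.castLEEmb hkn
  have hdeg : A.degree v = A.degree ι :=
    A.degree_eq_of_isPretransitive (G := Equiv.Perm (Fin n))
      (fun σ p q => by simp [hA, Function.Embedding.smul_apply]) v ι
  have hM : (univ.filter fun σ : Equiv.Perm (Fin n) =>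
      #(σ.support.filter fun i : Fin n => (i : ℕ) < k) = r) =
      univ.filter fun σ => σ • ι ∈ A.neighborFinset ι := by
    ext σ
    simp [hA, Equiv.Perm.card_support_filter_lt hkn, ι, Function.Embedding.smul_apply]
  have hcount := card_filter_smul_mem_mul_card (G := Equiv.Perm (Fin n)) ι (A.neighborFinset ι)
  rw [Fintype.card_embedding_eq, Fintype.card_perm, Fintype.card_fin, Fintype.card_fin,
    ← Nat.factorial_mul_descFactorial hkn, ← hM, SimpleGraph.card_neighborFinset_eq_degree,
    ← hdeg, mul_right_comm] at hcount
  exact (Nat.eq_of_mul_eq_mul_right (Nat.descFactorial_pos.2 hkn) hcount).symm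

theorem stmt_17 {n k r : ℕ} (hr : 1 ≤ r) (hrk : r ≤ k) (hkn : k ≤ n)
    (A : SimpleGraph (Fin k ↪ Fin n)) [DecidableRel A.Adj]
    (hA : ∀ p q : Fin k ↪ Fin n, A.Adj p q ↔
      (Finset.univ.filter fun i : Fin k => p i ≠ q i).card = r) :
    ∀ v : Fin k ↪ Fin n, (n - k).factorial * A.degree v =
      (Finset.univ.filter fun σ : Equiv.Perm (Fin n) =>
        (σ.support.filter fun i : Fin n => (i : ℕ) < k).card = r).card :=
  stmt_17_general hkn A hA
end

section
/- Let 1 ≤ r ≤ k ≤ n and let M(r) = {σ ∈ S_n : |support(σ) ∩ [k]| = r}. If λ is a real eigenvalue of the adjacency matrix of the arrangement graph A(n,k,r), then (n−k)!·λ is a real eigenvalue of the adjacency matrix of the Cayley graph Γ(S_n, M(r)). -/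
/-!
Restricting `τ⁻¹` to `[k]` maps `S_n` onto the injections `[k] → [n]`. Since `τ σ⁻¹` moves a
point `i ∈ [k]` exactly when `σ⁻¹ i ≠ τ⁻¹ i`, this map turns adjacency in `Γ` into adjacency in
`A`, and its fibres are cosets of the pointwise stabiliser of `[k]`, so they all have size
`(n - k)!`. Pulling an eigenvector of `A` back along the map therefore gives an eigenvector of
`Γ`: every `A`-neighbour of the image of `σ` is hit by exactly `(n - k)!` neighbours of `σ`.
-/

open Finset Matrix

theorem Matrix.mem_spectrum_iff_exists_mulVec_eq_smul_s18 {K n : Type*} [Field K] [Fintype n]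
    [DecidableEq n] {A : Matrix n n K} {μ : K} :
    μ ∈ spectrum K A ↔ ∃ v ≠ 0, A *ᵥ v = μ • v := by
  rw [← spectrum_toLin', ← Module.End.hasEigenvalue_iff_mem_spectrum]
  constructor
  · intro h
    obtain ⟨v, hv, hv0⟩ := h.exists_hasEigenvector
    exact ⟨v, hv0, by simpa using Module.End.mem_eigenspace_iff.mp hv⟩
  · rintro ⟨v, hv0, hv⟩
    exact Module.End.hasEigenvalue_of_hasEigenvector
      ⟨Module.End.mem_eigenspace_iff.mpr (by simpa using hv), hv0⟩

theorem Fintype.sum_comp_of_card_fiber_eq {V W M : Type*} [Fintype V] [Fintype W]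
    [DecidableEq W] [AddCommMonoid M] {φ : V → W} {c : ℕ} (hφ : ∀ w, #{v | φ v = w} = c)
    (g : W → M) : ∑ v, g (φ v) = c • ∑ w, g w := by
  rw [← Finset.sum_fiberwise univ φ, smul_sum]
  refine Finset.sum_congr rfl fun w _ => ?_
  rw [Finset.sum_congr rfl fun v hv => by rw [(mem_filter.mp hv).2], sum_const, hφ]

theorem MulAction.card_filter_smul_eq_mul_card {G X : Type*} [Group G] [MulAction G X]
    [Fintype G] [Fintype X] [DecidableEq X] [IsPretransitive G X] (x y : X) :
    #{g : G | g • x = y} * Fintype.card X = Fintype.card G := by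
  classical
  obtain ⟨g₀, rfl⟩ := exists_smul_eq G x y
  have hfiber : #{g : G | g • x = g₀ • x} = #{g : G | g ∈ stabilizer G x} :=
    card_equiv (Equiv.mulLeft g₀⁻¹) fun g => by simp [mul_smul, inv_smul_eq_iff]
  rw [hfiber, ← Fintype.card_subtype, ← Nat.card_eq_fintype_card, ← Nat.card_eq_fintype_card,
    ← Nat.card_eq_fintype_card, ← Subgroup.card_mul_index (stabilizer G x), index_stabilizer,
    orbit_eq_univ, Set.ncard_univ]

theorem Equiv.Perm.card_filter_smul_embedding_eq {α β : Type*} [Fintype α] [Fintype β]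
    [DecidableEq β] (x y : α ↪ β) :
    #{σ : Perm β | σ • x = y} = (Fintype.card β - Fintype.card α).factorial := by
  have : MulAction.IsPretransitive (Perm β) (α ↪ β) := ⟨exists_smul_eq_embedding⟩
  have hle := Fintype.card_le_of_embedding x
  have hcard := MulAction.card_filter_smul_eq_mul_card (G := Perm β) x y
  rw [Fintype.card_embedding_eq, Fintype.card_perm, ← Nat.factorial_mul_descFactorial hle] at hcard
  exact Nat.eq_of_mul_eq_mul_right (Nat.descFactorial_pos.mpr hle) hcard

namespace SimpleGraph

variable {V W : Type*} [Fintype V] [Fintype W] [DecidableEq W]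
  {G : SimpleGraph V} {H : SimpleGraph W} [DecidableRel G.Adj] [DecidableRel H.Adj]
  {φ : V → W} {c : ℕ}

theorem adjMatrix_mulVec_comp_of_card_fiber_eq {R : Type*} [NonAssocSemiring R]
    (hadj : ∀ u v, G.Adj u v ↔ H.Adj (φ u) (φ v)) (hφ : ∀ w, #{v | φ v = w} = c)
    (f : W → R) : G.adjMatrix R *ᵥ (f ∘ φ) = c • ((H.adjMatrix R *ᵥ f) ∘ φ) := by
  ext v
  simp only [mulVec, dotProduct, adjMatrix_apply, hadj, Function.comp_apply, Pi.smul_apply]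
  exact Fintype.sum_comp_of_card_fiber_eq hφ fun w => (if H.Adj (φ v) w then 1 else 0) * f w

theorem natCast_mul_mem_spectrum_adjMatrix_of_card_fiber_eq {K : Type*} [Field K]
    [DecidableEq V] (hadj : ∀ u v, G.Adj u v ↔ H.Adj (φ u) (φ v))
    (hφ : ∀ w, #{v | φ v = w} = c) (hc : c ≠ 0) {μ : K}
    (hμ : μ ∈ spectrum K (H.adjMatrix K)) : (c : K) * μ ∈ spectrum K (G.adjMatrix K) := by
  rw [mem_spectrum_iff_exists_mulVec_eq_smul_s18] at hμ ⊢
  obtain ⟨f, hf0, hf⟩ := hμ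
  refine ⟨f ∘ φ, fun hzero => hf0 (funext fun w => ?_), ?_⟩
  · obtain ⟨v, hv⟩ : ({v | φ v = w} : Finset V).Nonempty := by
      rw [← card_pos, hφ]
      exact Nat.pos_of_ne_zero hc
    simpa [(mem_filter.mp hv).2] using congrFun hzero v
  · rw [adjMatrix_mulVec_comp_of_card_fiber_eq hadj hφ, hf]
    ext v
    simp [mul_assoc]

end SimpleGraph

theorem Equiv.Perm.card_support_mul_inv_filter_lt {n k : ℕ} (hkn : k ≤ n) (σ τ : Perm (Fin n)) :
    ((τ * σ⁻¹).support.filter fun i : Fin n => (i : ℕ) < k).card =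
      #{i : Fin k | σ⁻¹ (Fin.castLE hkn i) ≠ τ⁻¹ (Fin.castLE hkn i)} := by
  rw [← card_map (Fin.castLEEmb hkn)]
  congr 1
  ext j
  simp only [mem_filter, Perm.mem_support, Perm.mul_apply, Perm.inv_def, mem_map, mem_univ,
    true_and, Fin.coe_castLEEmb]
  constructor
  · rintro ⟨hj, hjk⟩
    exact ⟨⟨j, hjk⟩, fun h => hj ((Equiv.eq_symm_apply τ).mp h), rfl⟩
  · rintro ⟨i, hi, rfl⟩
    exact ⟨fun h => hi ((Equiv.eq_symm_apply τ).mpr h), i.2⟩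

theorem stmt_18_general {n k r : ℕ} (hkn : k ≤ n)
    (A : SimpleGraph (Fin k ↪ Fin n)) [DecidableRel A.Adj]
    (hA : ∀ p q : Fin k ↪ Fin n, A.Adj p q ↔
      (Finset.univ.filter fun i : Fin k => p i ≠ q i).card = r)
    (Γ : SimpleGraph (Equiv.Perm (Fin n))) [DecidableRel Γ.Adj]
    (hΓ : ∀ u v : Equiv.Perm (Fin n), Γ.Adj u v ↔
      ((v * u⁻¹).support.filter fun i : Fin n => (i : ℕ) < k).card = r) :
    ∀ μ : ℝ, μ ∈ spectrum ℝ (A.adjMatrix ℝ) →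
      ((n - k).factorial : ℝ) * μ ∈ spectrum ℝ (Γ.adjMatrix ℝ) := by
  intro μ hμ
  let φ : Equiv.Perm (Fin n) → (Fin k ↪ Fin n) := fun τ => τ⁻¹ • Fin.castLEEmb hkn
  have hadj : ∀ σ τ, Γ.Adj σ τ ↔ A.Adj (φ σ) (φ τ) := fun σ τ => by
    rw [hΓ, hA, Equiv.Perm.card_support_mul_inv_filter_lt hkn]
    rfl
  have hfiber : ∀ q, #{τ | φ τ = q} = (n - k).factorial := fun q => by
    rw [card_equiv (t := {σ | σ • Fin.castLEEmb hkn = q}) (Equiv.inv _) fun τ => by simp [φ],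
      Equiv.Perm.card_filter_smul_embedding_eq, Fintype.card_fin, Fintype.card_fin]
  exact SimpleGraph.natCast_mul_mem_spectrum_adjMatrix_of_card_fiber_eq hadj hfiber
    (Nat.factorial_ne_zero _) hμ

theorem stmt_18 {n k r : ℕ} (hr : 1 ≤ r) (hrk : r ≤ k) (hkn : k ≤ n)
    (A : SimpleGraph (Fin k ↪ Fin n)) [DecidableRel A.Adj]
    (hA : ∀ p q : Fin k ↪ Fin n, A.Adj p q ↔
      (Finset.univ.filter fun i : Fin k => p i ≠ q i).card = r)
    (Γ : SimpleGraph (Equiv.Perm (Fin n))) [DecidableRel Γ.Adj]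
    (hΓ : ∀ u v : Equiv.Perm (Fin n), Γ.Adj u v ↔
      ((v * u⁻¹).support.filter fun i : Fin n => (i : ℕ) < k).card = r) :
    ∀ μ : ℝ, μ ∈ spectrum ℝ (A.adjMatrix ℝ) →
      ((n - k).factorial : ℝ) * μ ∈ spectrum ℝ (Γ.adjMatrix ℝ) :=
  stmt_18_general hkn A hA Γ hΓ
end
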